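/- arXiv:1901.09793 — 9 statements merged into one kernel-verified Lean document; each statement's English description precedes it below -/
import Mathlib

section
/- For every integer sequence X of length n ≥ 1, the number of peaks of X satisfies nb_peak(X) ≤ ⌊(n−1)/2⌋. -/
/-- The signature of an integer sequence: the word over `{<,=,>}` (encoded as
`Ordering.lt`, `Ordering.eq`, `Ordering.gt`) comparing consecutive elements. -/
def signature (X : List ℤ) : List Ordering :=
  List.zipWith compare X X.tail

/-- The number of peaks of a word `w` over `{<,=,>}`: the number of positions `j`
with `w_j = '>'` such that there is `i < j` with `w_i = '<'` and `w_k = '='`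
for all `i < k < j`. -/
noncomputable def nbPeak (w : List Ordering) : ℕ :=
  {j : ℕ | w[j]? = some Ordering.gt ∧
    ∃ i < j, w[i]? = some Ordering.lt ∧
      ∀ k, i < k → k < j → w[k]? = some Ordering.eq}.ncard

/-! A peak ends with `>` and the letter just before it is `<` or `=`, so position `0` is never a
peak and no two peaks are adjacent. Shifting the peaks one step to the left therefore gives as
many further positions, disjoint from the peaks, and so at most half of the `n - 1` positions of
the signature are peaks. -/

theorem Set.two_mul_ncard_le_of_succ_notMem {s : Set ℕ} {n : ℕ} (hs : s ⊆ Set.Ioo 0 n)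
    (hsucc : ∀ j ∈ s, j + 1 ∉ s) : 2 * s.ncard ≤ n := by
  have hfin : s.Finite := (Set.finite_Ioo 0 n).subset hs
  have hinj : Set.InjOn (· - 1) s := fun a ha b hb hab => by
    have := (hs ha).1
    have := (hs hb).1
    simp only at hab
    omega
  have hdisj : Disjoint s ((· - 1) '' s) := by
    rintro t hts htpred j hj
    obtain ⟨i, hi, rfl⟩ := htpred hj
    have hi_pos := (hs hi).1
    exact hsucc (i - 1) (hts hj) (by rwa [Nat.sub_add_cancel hi_pos])
  have hsub : s ∪ (· - 1) '' s ⊆ Set.Iio n := by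
    rintro j (hj | ⟨i, hi, rfl⟩)
    · exact (hs hj).2
    · exact lt_of_le_of_lt (Nat.sub_le i 1) (hs hi).2
  calc 2 * s.ncard = (s ∪ (· - 1) '' s).ncard := by
        rw [Set.ncard_union_eq hdisj hfin (hfin.image _), hinj.ncard_image, two_mul]
    _ ≤ (Set.Iio n).ncard := Set.ncard_le_ncard hsub (Set.finite_Iio n)
    _ = n := by simp

def peakSet (w : List Ordering) : Set ℕ :=
  {j : ℕ | w[j]? = some Ordering.gt ∧
    ∃ i < j, w[i]? = some Ordering.lt ∧
      ∀ k, i < k → k < j → w[k]? = some Ordering.eq}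

theorem nbPeak_eq_ncard_peakSet (w : List Ordering) : nbPeak w = (peakSet w).ncard := rfl

theorem peakSet_subset_Ioo (w : List Ordering) : peakSet w ⊆ Set.Ioo 0 w.length := by
  rintro j ⟨hj, i, hij, -⟩
  exact ⟨Nat.zero_lt_of_lt hij, (List.getElem?_eq_some_iff.1 hj).1⟩

theorem succ_notMem_peakSet {w : List Ordering} {j : ℕ} (hj : j ∈ peakSet w) :
    j + 1 ∉ peakSet w := by
  rintro ⟨-, i, hij, hi, heq⟩
  have hgt : w[j]? = some .gt := hj.1
  rcases Nat.lt_succ_iff_lt_or_eq.1 hij with hlt | rfl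
  · simp [heq j hlt (Nat.lt_succ_self j)] at hgt
  · simp [hi] at hgt

theorem nbPeak_le_half (w : List Ordering) : nbPeak w ≤ w.length / 2 := by
  rw [nbPeak_eq_ncard_peakSet, Nat.le_div_iff_mul_le two_pos, mul_comm]
  exact Set.two_mul_ncard_le_of_succ_notMem (peakSet_subset_Ioo w)
    fun _ => succ_notMem_peakSet

theorem length_signature (X : List ℤ) : (signature X).length = X.length - 1 := by
  simp [signature]

theorem nbPeak_le_floor_general (X : List ℤ) :
    nbPeak (signature X) ≤ (X.length - 1) / 2 :=
  length_signature X ▸ nbPeak_le_half (signature X)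

/-- For every integer sequence `X` of length `n ≥ 1`,
`nb_peak(X) ≤ ⌊(n−1)/2⌋`. -/
theorem nbPeak_le_floor (X : List ℤ) (hX : X ≠ []) :
    nbPeak (signature X) ≤ (X.length - 1) / 2 :=
  nbPeak_le_floor_general X
end

section
/- For every integer sequence X, nb_peak(X) ≤ nb_valley(X) + 1. -/
/-- The set of valley positions of a word. -/
def valleySet (w : List Ordering) : Set ℕ :=
  {j : ℕ | w[j]? = some Ordering.lt ∧
    ∃ i < j, w[i]? = some Ordering.gt ∧
      ∀ k, i < k → k < j → w[k]? = some Ordering.eq}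

lemma peak_lt_length {w : List Ordering} {j : ℕ} (h : j ∈ peakSet w) : j < w.length :=
  (List.getElem?_eq_some_iff.mp h.1).1

lemma valley_lt_length {w : List Ordering} {j : ℕ} (h : j ∈ valleySet w) : j < w.length :=
  (List.getElem?_eq_some_iff.mp h.1).1

lemma exists_valley (w : List Ordering) {j p0 : ℕ} (hj : j ∈ peakSet w)
    (hp0 : p0 ∈ peakSet w) (hp0j : p0 < j) :
    ∃ v ∈ valleySet w, v < j ∧ ∀ p ∈ peakSet w, p < j → p < v := by
  classical
  obtain ⟨hwj, i, hij, hwi, hbet⟩ := hj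
  -- j' := greatest peak below j
  set j' := Nat.findGreatest (· ∈ peakSet w) (j - 1) with hj'def
  have hj'mem : j' ∈ peakSet w :=
    Nat.findGreatest_spec (m := p0) (by omega) hp0
  have hj'lt : j' < j := lt_of_le_of_lt (Nat.findGreatest_le _) (by omega)
  have hmax : ∀ p ∈ peakSet w, p < j → p ≤ j' := by
    intro p hp hpj
    by_contra hc
    exact Nat.findGreatest_is_greatest (P := (· ∈ peakSet w)) (n := j - 1)
      (by omega) (by omega) hp
  have hwj' : w[j']? = some Ordering.gt := hj'mem.1
  -- i is above j'
  have hij' : j' < i := by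
    rcases lt_trichotomy i j' with h | h | h
    · have := hbet j' h hj'lt
      rw [this] at hwj'; simp at hwj'
    · rw [h, hwj'] at hwi; simp at hwi
    · exact h
  -- v := least `<` position in (j', i]
  set S : Set ℕ := {v | j' < v ∧ v ≤ i ∧ w[v]? = some Ordering.lt} with hSdef
  have hiS : i ∈ S := ⟨hij', le_refl i, hwi⟩
  set v := sInf S with hvdef
  have hvS : v ∈ S := Nat.sInf_mem ⟨i, hiS⟩
  obtain ⟨hj'v, hvi, hwv⟩ := hvS
  have hvlen : v < w.length := (List.getElem?_eq_some_iff.mp hwv).1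
  -- i' := greatest non-`=` position in [j', v)
  set i' := Nat.findGreatest (fun k => j' ≤ k ∧ w[k]? ≠ some Ordering.eq) (v - 1) with hi'def
  have hi'spec : j' ≤ i' ∧ w[i']? ≠ some Ordering.eq := by
    rw [hi'def]
    exact Nat.findGreatest_spec (P := fun k => j' ≤ k ∧ w[k]? ≠ some Ordering.eq)
      (n := v - 1) (m := j') (by omega) ⟨le_refl _, by rw [hwj']; simp⟩
  have hi'v : i' < v := lt_of_le_of_lt (Nat.findGreatest_le _) (by omega)
  have hi'len : i' < w.length := by omega
  obtain ⟨o, ho⟩ : ∃ o, w[i']? = some o := ⟨w[i']'hi'len, List.getElem?_eq_getElem hi'len⟩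
  have hbet' : ∀ k, i' < k → k < v → w[k]? = some Ordering.eq := by
    intro k hk1 hk2
    by_contra hc
    exact Nat.findGreatest_is_greatest
      (P := fun k => j' ≤ k ∧ w[k]? ≠ some Ordering.eq) (n := v - 1)
      hk1 (by omega) ⟨by omega, hc⟩
  have hogt : o = Ordering.gt := by
    rcases o with _ | _ | _
    · -- o = lt : contradicts minimality of v
      exfalso
      have hne : i' ≠ j' := by
        intro h; rw [h, hwj'] at ho; simp at ho
      have : i' ∈ S := ⟨by omega, by omega, ho⟩
      have := Nat.sInf_le this
      omega
    · exfalso; rw [ho] at hi'spec; exact hi'spec.2 rfl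
    · rfl
  refine ⟨v, ⟨hwv, i', hi'v, by rw [ho, hogt], hbet'⟩, by omega, ?_⟩
  intro p hp hpj
  exact lt_of_le_of_lt (hmax p hp hpj) hj'v

lemma peak_le_valley_add_one (w : List Ordering) :
    (peakSet w).ncard ≤ (valleySet w).ncard + 1 := by
  classical
  have hPfin : (peakSet w).Finite :=
    (Set.finite_Iio w.length).subset fun j hj => peak_lt_length hj
  have hVfin : (valleySet w).Finite :=
    (Set.finite_Iio w.length).subset fun j hj => valley_lt_length hj
  rcases (peakSet w).eq_empty_or_nonempty with h | h
  · simp [h]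
  set m := sInf (peakSet w) with hmdef
  have hm : m ∈ peakSet w := Nat.sInf_mem h
  set f : ℕ → ℕ := fun j =>
    sInf {v | v ∈ valleySet w ∧ v < j ∧ ∀ p ∈ peakSet w, p < j → p < v} with hfdef
  have hfspec : ∀ j ∈ peakSet w \ {m},
      f j ∈ valleySet w ∧ f j < j ∧ ∀ p ∈ peakSet w, p < j → p < f j := by
    intro j hj
    have hmj : m < j := lt_of_le_of_ne (Nat.sInf_le hj.1) (fun h => hj.2 h.symm)
    obtain ⟨v, hv1, hv2, hv3⟩ := exists_valley w hj.1 hm hmj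
    have : sInf {v | v ∈ valleySet w ∧ v < j ∧ ∀ p ∈ peakSet w, p < j → p < v} ∈
        {v | v ∈ valleySet w ∧ v < j ∧ ∀ p ∈ peakSet w, p < j → p < v} :=
      Nat.sInf_mem ⟨v, hv1, hv2, hv3⟩
    exact this
  have hcard : (peakSet w \ {m}).ncard ≤ (valleySet w).ncard := by
    refine Set.ncard_le_ncard_of_injOn f (fun j hj => (hfspec j hj).1) ?_ hVfin
    intro j1 hj1 j2 hj2 hfeq
    by_contra hne
    rcases lt_or_gt_of_ne hne with hlt | hlt
    · have h1 := (hfspec j1 hj1).2.1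
      have h2 := (hfspec j2 hj2).2.2 j1 hj1.1 hlt
      omega
    · have h1 := (hfspec j2 hj2).2.1
      have h2 := (hfspec j1 hj1).2.2 j2 hj2.1 hlt
      omega
  have := Set.ncard_diff_singleton_add_one hm hPfin
  omega

/-- The number of valleys of a word `w` over `{<,=,>}`: the number of positions `j`
with `w_j = '<'` such that there is `i < j` with `w_i = '>'` and `w_k = '='`
for all `i < k < j`. -/
noncomputable def nbValley (w : List Ordering) : ℕ :=
  {j : ℕ | w[j]? = some Ordering.lt ∧
    ∃ i < j, w[i]? = some Ordering.gt ∧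
      ∀ k, i < k → k < j → w[k]? = some Ordering.eq}.ncard

/-- For every integer sequence `X`, `nb_peak(X) ≤ nb_valley(X) + 1`. -/
theorem nbPeak_le_nbValley_add_one (X : List ℤ) (hX : X ≠ []) :
    nbPeak (signature X) ≤ nbValley (signature X) + 1 := by
  have h : nbPeak (signature X) = (peakSet (signature X)).ncard := rfl
  have h2 : nbValley (signature X) = (valleySet (signature X)).ncard := rfl
  rw [h, h2]
  exact peak_le_valley_add_one (signature X)
end

section
/- For every integer sequence X, nb_valley(X) ≤ nb_peak(X) + 1. -/
/-!
Between two valleys `j < j'` there is a peak: the '<' at `j` is followed, before the '>'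
that opens the valley at `j'`, by a '>' whose nearest non-'=' predecessor is a '<'.
Hence sending every valley except the first one to the last peak before it is strictly
monotone.
-/

theorem Set.ncard_le_ncard_add_one_of_exists_between {A B : Set ℕ} (hB : B.Finite)
    (hAB : ∀ a ∈ A, ∀ a' ∈ A, a < a' → ∃ b ∈ B, a < b ∧ b < a') :
    A.ncard ≤ B.ncard + 1 := by
  classical
  set f : ℕ → ℕ := fun a => Nat.findGreatest (· ∈ B) (a - 1)
  have hf : ∀ a ∈ A, ∀ a' ∈ A, a < a' → a < f a' ∧ f a' ∈ B := by
    intro a ha a' ha' h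
    obtain ⟨b, hb, hab, hba'⟩ := hAB a ha a' ha' h
    have hle : b ≤ a' - 1 := by omega
    exact ⟨hab.trans_le (Nat.le_findGreatest hle hb), Nat.findGreatest_spec hle hb⟩
  have hmin : ∀ a ∈ A \ {sInf A}, sInf A < a := fun a ha => (Nat.sInf_le ha.1).lt_of_ne' ha.2
  have hmono : StrictMonoOn f (A \ {sInf A}) := by
    intro a ha a' ha' h
    have hfa' : a < f a' := (hf a ha.1 a' ha'.1 h).1
    have hfa : f a ≤ a - 1 := Nat.findGreatest_le _
    have ha0 : sInf A < a := hmin a ha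
    omega
  have hmaps : ∀ a ∈ A \ {sInf A}, f a ∈ B := fun a ha =>
    (hf _ (Nat.sInf_mem ⟨a, ha.1⟩) a ha.1 (hmin a ha)).2
  calc A.ncard ≤ (A \ {sInf A}).ncard + ({sInf A} : Set ℕ).ncard :=
        ncard_le_ncard_sdiff_add_ncard _ _
    _ ≤ B.ncard + 1 := by
        rw [ncard_singleton]
        exact Nat.add_le_add_right (ncard_le_ncard_of_injOn f hmaps hmono.injOn hB) 1

theorem peakSet_finite (w : List Ordering) : (peakSet w).Finite :=
  (Set.finite_Iio w.length).subset fun _ hj => (List.getElem?_eq_some_iff.1 hj.1).1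

theorem exists_mem_peakSet_of_lt_of_gt {w : List Ordering} {a b : ℕ} (hab : a < b)
    (ha : w[a]? = some .lt) (hb : w[b]? = some .gt) : ∃ m ∈ peakSet w, a < m ∧ m ≤ b := by
  classical
  induction b using Nat.strong_induction_on with
  | _ b ih =>
  have hlen : b < w.length := (List.getElem?_eq_some_iff.1 hb).1
  have ha_ne : w[a]? ≠ some .eq := by simp [ha]
  set i := Nat.findGreatest (fun k => w[k]? ≠ some .eq) (b - 1)
  have hai : a ≤ i := Nat.le_findGreatest (by omega) ha_ne
  have hib : i < b := by
    have : i ≤ b - 1 := Nat.findGreatest_le _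
    omega
  have hi : w[i]? ≠ some .eq := Nat.findGreatest_spec (P := fun k => w[k]? ≠ some .eq) (m := a) (by omega) ha_ne
  have heq : ∀ k, i < k → k < b → w[k]? = some .eq := fun k hik hkb =>
    not_not.1 (Nat.findGreatest_is_greatest hik (by omega))
  obtain ⟨x, hx⟩ : ∃ x, w[i]? = some x := ⟨w[i], List.getElem?_eq_getElem (by omega)⟩
  cases x with
  | lt => exact ⟨b, ⟨hb, i, hib, hx, heq⟩, hab, le_rfl⟩
  | eq => exact absurd hx hi
  | gt =>
    have hai' : a < i := hai.lt_of_ne (by rintro rfl; simp [ha] at hx)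
    obtain ⟨m, hm, ham, hmi⟩ := ih i hib hai' hx
    exact ⟨m, hm, ham, hmi.trans hib.le⟩

theorem exists_mem_peakSet_between {w : List Ordering} {j j' : ℕ} (hj : j ∈ valleySet w)
    (hj' : j' ∈ valleySet w) (h : j < j') : ∃ m ∈ peakSet w, j < m ∧ m < j' := by
  obtain ⟨hj, -⟩ := hj
  obtain ⟨-, i, hij', hi, heq⟩ := hj'
  have hji : j < i := by
    by_contra! hij
    rcases hij.lt_or_eq with hij | rfl
    · simpa [hj] using heq j hij h
    · simp [hj] at hi
  obtain ⟨m, hm, hjm, hmi⟩ := exists_mem_peakSet_of_lt_of_gt hji hj hi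
  exact ⟨m, hm, hjm, hmi.trans_lt hij'⟩

theorem nbValley_le_nbPeak_add_one_general (X : List ℤ) :
    nbValley (signature X) ≤ nbPeak (signature X) + 1 :=
  Set.ncard_le_ncard_add_one_of_exists_between (peakSet_finite _)
    fun _ hj _ hj' h => exists_mem_peakSet_between hj hj' h

/-- For every integer sequence `X`, `nb_valley(X) ≤ nb_peak(X) + 1`. -/
theorem nbValley_le_nbPeak_add_one (X : List ℤ) (hX : X ≠ []) :
    nbValley (signature X) ≤ nbPeak (signature X) + 1 :=
  nbValley_le_nbPeak_add_one_general X
end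

section
/- For every odd integer n ≥ 3, there exists an integer sequence X of length n with nb_peak(X) = (n−1)/2 and nb_valley(X) = (n−1)/2 − 1; in particular the point (nb_peak, nb_valley) = ((n−1)/2, (n−1)/2 − 1), which lies on the line nb_peak + nb_valley = n − 2, is feasible for every odd length n ≥ 3. -/
/-- The zigzag sequence 0,1,0,1,... of length `2m+1`. -/
def zig (m : ℕ) : List ℤ := (List.range (2 * m + 1)).map fun i => ((i % 2 : ℕ) : ℤ)

lemma zig_sig_get (m j : ℕ) :
    (signature (zig m))[j]? =
      if j < 2 * m then some (if j % 2 = 0 then Ordering.lt else Ordering.gt) else none := by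
  unfold signature zig
  rw [List.getElem?_zipWith, List.getElem?_tail, List.getElem?_map, List.getElem?_map]
  by_cases h : j < 2 * m
  · rw [List.getElem?_range (by omega), List.getElem?_range (by omega)]
    simp only [Option.map_some]
    rcases Nat.even_or_odd j with he | ho
    · have h1 : j % 2 = 0 := Nat.even_iff.mp he
      have h2 : (j + 1) % 2 = 1 := by omega
      rw [h1, h2]
      simp only [h, if_true]
      decide
    · have h1 : j % 2 = 1 := Nat.odd_iff.mp ho
      have h2 : (j + 1) % 2 = 0 := by omega
      rw [h1, h2]
      simp only [h, if_true]
      decide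
  · have : (List.range (2 * m + 1))[j + 1]? = none := by
      rw [List.getElem?_eq_none] <;> simp <;> omega
    rw [this]
    rw [if_neg h]
    rcases (List.range (2 * m + 1))[j]?.map (fun i => ((i % 2 : ℕ) : ℤ)) with _ | a <;> rfl

lemma zig_no_eq (m k : ℕ) : (signature (zig m))[k]? ≠ some Ordering.eq := by
  rw [zig_sig_get]
  split
  · split <;> simp
  · simp

lemma zig_peak_set (m : ℕ) :
    {j : ℕ | (signature (zig m))[j]? = some Ordering.gt ∧
      ∃ i < j, (signature (zig m))[i]? = some Ordering.lt ∧
        ∀ k, i < k → k < j → (signature (zig m))[k]? = some Ordering.eq} =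
      ↑((Finset.range m).image fun i => 2 * i + 1) := by
  ext j
  simp only [Set.mem_setOf_eq, Finset.coe_image, Finset.coe_range, Set.mem_image, Set.mem_Iio]
  constructor
  · rintro ⟨hj, -⟩
    rw [zig_sig_get] at hj
    split at hj
    · split at hj
      · simp at hj
      · exact ⟨j / 2, by omega, by omega⟩
    · simp at hj
  · rintro ⟨i, hi, rfl⟩
    refine ⟨?_, 2 * i, by omega, ?_, fun k h1 h2 => by omega⟩
    · rw [zig_sig_get, if_pos (by omega), if_neg (by omega)]
    · rw [zig_sig_get, if_pos (by omega), if_pos (by omega)]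

lemma zig_valley_set (m : ℕ) :
    {j : ℕ | (signature (zig m))[j]? = some Ordering.lt ∧
      ∃ i < j, (signature (zig m))[i]? = some Ordering.gt ∧
        ∀ k, i < k → k < j → (signature (zig m))[k]? = some Ordering.eq} =
      ↑((Finset.range (m - 1)).image fun i => 2 * i + 2) := by
  ext j
  simp only [Set.mem_setOf_eq, Finset.coe_image, Finset.coe_range, Set.mem_image, Set.mem_Iio]
  constructor
  · rintro ⟨hj, i, hij, hi, hbetween⟩
    rw [zig_sig_get] at hj
    have hj2 : j < 2 * m ∧ j % 2 = 0 := by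
      split at hj
      · split at hj
        · exact ⟨by omega, by omega⟩
        · simp at hj
      · simp at hj
    rw [zig_sig_get] at hi
    have hi2 : i < 2 * m ∧ i % 2 = 1 := by
      split at hi
      · split at hi
        · simp at hi
        · exact ⟨by omega, by omega⟩
      · simp at hi
    have hieq : i = j - 1 := by
      by_contra h
      exact zig_no_eq m (i + 1) (hbetween (i + 1) (by omega) (by omega))
    exact ⟨j / 2 - 1, by omega, by omega⟩
  · rintro ⟨i, hi, rfl⟩
    refine ⟨?_, 2 * i + 1, by omega, ?_, fun k h1 h2 => by omega⟩
    · rw [zig_sig_get, if_pos (by omega), if_pos (by omega)]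
    · rw [zig_sig_get, if_pos (by omega), if_neg (by omega)]

/-- For every odd `n ≥ 3`, there is an integer sequence `X` of length `n`
with `nb_peak(X) = (n−1)/2` and `nb_valley(X) = (n−1)/2 − 1`; in particular,
the point `((n−1)/2, (n−1)/2 − 1)`, lying on the line
`nb_peak + nb_valley = n − 2`, is feasible for every odd length `n ≥ 3`. -/
theorem feasible_maxPeak_point (n : ℕ) (hn : 3 ≤ n) (hodd : Odd n) :
    ∃ X : List ℤ, X.length = n ∧
      nbPeak (signature X) = (n - 1) / 2 ∧
      nbValley (signature X) = (n - 1) / 2 - 1 := by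
  obtain ⟨m, rfl⟩ := hodd
  refine ⟨zig m, ?_, ?_, ?_⟩
  · simp [zig]
  · rw [nbPeak, zig_peak_set, Set.ncard_coe_finset,
      Finset.card_image_of_injective _ (fun a b h => by omega), Finset.card_range]
    omega
  · rw [nbValley, zig_valley_set, Set.ncard_coe_finset,
      Finset.card_image_of_injective _ (fun a b h => by omega), Finset.card_range]
    omega
end

section
/- For every odd integer n ≥ 3, there exists an integer sequence X of length n with nb_peak(X) = (n−1)/2 − 1 and nb_valley(X) = (n−1)/2; in particular the point (nb_peak, nb_valley) = ((n−1)/2 − 1, (n−1)/2), which lies on the line nb_peak + nb_valley = n − 2, is feasible for every odd length n ≥ 3; together with the feasibility of ((n−1)/2, (n−1)/2 − 1) this shows that the inequality nb_peak + nb_valley ≤ n − 2 is facet defining for odd n. -/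
/-! The sequence `1, 0, 1, 0, …, 1` of odd length `n` has signature `><><⋯><`: every `<` is a
valley and every `>` except the first is a peak, giving `(n - 1) / 2` valleys and one peak fewer. -/

open Set

lemma ncard_setOf_lt_odd (L : ℕ) : {j | j < L ∧ Odd j}.ncard = L / 2 := by
  have : {j | j < L ∧ Odd j} = (fun i => 2 * i + 1) '' Iio (L / 2) := by
    ext j
    simp only [mem_ofPred_eq, mem_image, mem_Iio, Nat.odd_iff]
    constructor
    · rintro ⟨hj, hodd⟩
      exact ⟨j / 2, by omega, by omega⟩
    · rintro ⟨i, hi, rfl⟩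
      omega
  rw [this, ncard_image_of_injective _ (fun a b h => by omega), ncard_Iio_nat]

lemma signature_map_range (f : ℕ → ℤ) (n : ℕ) :
    signature ((List.range n).map f) =
      (List.range (n - 1)).map fun j => compare (f j) (f (j + 1)) := by
  apply List.ext_getElem
  · simp [signature]
  · intro j _ _
    simp [signature, List.getElem_zipWith]

def altWord (L : ℕ) : List Ordering :=
  (List.range L).map fun j => if Even j then .gt else .lt

lemma getElem?_altWord (L j : ℕ) :
    (altWord L)[j]? = if j < L then some (if Even j then .gt else .lt) else none := by
  unfold altWord
  split_ifs <;> simp_all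

lemma getElem?_altWord_eq_some_lt {L j : ℕ} :
    (altWord L)[j]? = some .lt ↔ j < L ∧ Odd j := by
  rw [getElem?_altWord, ← Nat.not_even_iff_odd]
  split_ifs <;> simp_all

lemma getElem?_altWord_eq_some_gt {L j : ℕ} :
    (altWord L)[j]? = some .gt ↔ j < L ∧ Even j := by
  rw [getElem?_altWord]
  split_ifs <;> simp_all

lemma nbValley_altWord (L : ℕ) : nbValley (altWord L) = L / 2 := by
  rw [nbValley, ← ncard_setOf_lt_odd]
  congr 1
  ext j
  simp only [mem_ofPred_eq, getElem?_altWord_eq_some_lt, getElem?_altWord_eq_some_gt]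
  constructor
  · exact fun h => h.1
  · rintro ⟨hL, k, rfl⟩
    exact ⟨⟨hL, odd_two_mul_add_one k⟩, 2 * k, by omega, ⟨by omega, even_two_mul k⟩,
      fun _ _ _ => by omega⟩

lemma nbPeak_altWord (L : ℕ) : nbPeak (altWord L) = (L - 1) / 2 := by
  rw [nbPeak, ← ncard_setOf_lt_odd,
    ← ncard_image_of_injective {j | j < L - 1 ∧ Odd j} Nat.succ_injective]
  congr 1
  ext j
  simp only [mem_ofPred_eq, mem_image, getElem?_altWord_eq_some_lt, getElem?_altWord_eq_some_gt]
  constructor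
  · rintro ⟨⟨hL, heven⟩, i, hij, ⟨-, hodd⟩, -⟩
    have hj : 1 ≤ j := by omega
    exact ⟨j - 1, ⟨by omega, Nat.Even.sub_odd hj heven odd_one⟩, by omega⟩
  · rintro ⟨i, ⟨hi, hodd⟩, rfl⟩
    exact ⟨⟨by omega, hodd.add_one⟩, i, i.lt_succ_self, ⟨by omega, hodd⟩, fun _ _ _ => by omega⟩

def altSeq (n : ℕ) : List ℤ :=
  (List.range n).map fun j => if Even j then 1 else 0

lemma signature_altSeq (n : ℕ) : signature (altSeq n) = altWord (n - 1) := by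
  rw [altSeq, signature_map_range, altWord]
  congr 1
  funext j
  by_cases hj : Even j <;> simp [hj, Nat.even_add_one] <;> decide

theorem feasible_maxValley_point_general (n : ℕ) (hodd : Odd n) :
    ∃ X : List ℤ, X.length = n ∧
      nbPeak (signature X) = (n - 1) / 2 - 1 ∧
      nbValley (signature X) = (n - 1) / 2 := by
  obtain ⟨m, rfl⟩ := hodd
  refine ⟨altSeq (2 * m + 1), by simp [altSeq], ?_, ?_⟩
  · rw [signature_altSeq, nbPeak_altWord]
    omega
  · rw [signature_altSeq, nbValley_altWord]

/-- For every odd `n ≥ 3`, there is an integer sequence `X` of length `n`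
with `nb_peak(X) = (n−1)/2 − 1` and `nb_valley(X) = (n−1)/2`; in particular,
the point `((n−1)/2 − 1, (n−1)/2)`, lying on the line
`nb_peak + nb_valley = n − 2`, is feasible for every odd length `n ≥ 3`. -/
theorem feasible_maxValley_point (n : ℕ) (hn : 3 ≤ n) (hodd : Odd n) :
    ∃ X : List ℤ, X.length = n ∧
      nbPeak (signature X) = (n - 1) / 2 - 1 ∧
      nbValley (signature X) = (n - 1) / 2 :=
  feasible_maxValley_point_general n hodd
end

section
/- For every natural number δ, the language { w ∈ Σ* : nb_peak(w) = ⌊|w|/2⌋ − δ } is a regular language over Σ; equivalently, the set of signatures of all integer sequences whose gap with respect to nb_peak equals δ is recognised by a deterministic finite automaton with finitely many states (the δ-gap automaton for nb_peak). -/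
namespace GapNbPeak

def astep (a : Bool) (c : Ordering) : Bool :=
  match c with
  | .lt => true
  | .eq => a
  | .gt => false

def armedL (w : List Ordering) : Bool := w.foldl astep false

def cstep (s : Bool × ℕ) (c : Ordering) : Bool × ℕ :=
  (astep s.1 c, if s.1 && (c == Ordering.gt) then s.2 + 1 else s.2)

def cnt (w : List Ordering) : ℕ := (w.foldl cstep (false, 0)).2

lemma foldl_cstep_fst (w : List Ordering) : ∀ s : Bool × ℕ,
    (w.foldl cstep s).1 = w.foldl astep s.1 := by
  induction w with
  | nil => intro s; rfl
  | cons c w ih => intro s; simpa [cstep] using ih _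

lemma armedL_concat (w : List Ordering) (c : Ordering) :
    armedL (w ++ [c]) = astep (armedL w) c := by
  simp [armedL, List.foldl_append]

lemma cnt_concat (w : List Ordering) (c : Ordering) :
    cnt (w ++ [c]) = if armedL w && (c == Ordering.gt) then cnt w + 1 else cnt w := by
  simp only [cnt, List.foldl_append, List.foldl_cons, List.foldl_nil, cstep,
    foldl_cstep_fst]
  rfl

lemma armed_iff (w : List Ordering) :
    armedL w = true ↔ ∃ i, w[i]? = some Ordering.lt ∧
      ∀ k, i < k → k < w.length → w[k]? = some Ordering.eq := by
  induction w using List.reverseRecOn with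
  | nil => simp [armedL]
  | append_singleton w c ih =>
    rw [armedL_concat]
    cases c with
    | lt =>
      simp only [astep, true_iff]
      refine ⟨w.length, by simpa using List.getElem?_concat_length w Ordering.lt, ?_⟩
      intro k hk hk'
      simp only [List.length_append, List.length_singleton] at hk'
      omega
    | eq =>
      show armedL w = true ↔ _
      rw [ih]
      constructor
      · rintro ⟨i, hi, hall⟩
        have hil : i < w.length := (List.getElem?_eq_some_iff.mp hi).1
        refine ⟨i, by rw [List.getElem?_append_left hil]; exact hi, ?_⟩
        intro k hk hk'
        simp only [List.length_append, List.length_singleton] at hk'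
        rcases lt_or_eq_of_le (Nat.lt_succ_iff.mp hk') with h | h
        · rw [List.getElem?_append_left h]; exact hall k hk h
        · subst h; simpa using List.getElem?_concat_length w Ordering.eq
      · rintro ⟨i, hi, hall⟩
        have hil' : i < w.length + 1 := by
          have := (List.getElem?_eq_some_iff.mp hi).1; simpa using this
        have hil : i < w.length := by
          rcases Nat.lt_succ_iff_lt_or_eq.mp hil' with h | h
          · exact h
          · exfalso; subst h
            rw [List.getElem?_concat_length] at hi; simp at hi
        rw [List.getElem?_append_left hil] at hi
        refine ⟨i, hi, ?_⟩
        intro k hk hk'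
        have := hall k hk (by simp only [List.length_append, List.length_singleton]; omega)
        rwa [List.getElem?_append_left hk'] at this
    | gt =>
      simp only [astep, Bool.false_eq_true, false_iff]
      rintro ⟨i, hi, hall⟩
      have hil' : i < w.length + 1 := by
        have := (List.getElem?_eq_some_iff.mp hi).1; simpa using this
      have hil : i < w.length := by
        rcases Nat.lt_succ_iff_lt_or_eq.mp hil' with h | h
        · exact h
        · exfalso; subst h
          rw [List.getElem?_concat_length] at hi; simp at hi
      have := hall w.length hil (by simp)
      rw [List.getElem?_concat_length] at this
      simp at this

def peakSet (w : List Ordering) : Set ℕ :=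
  {j : ℕ | w[j]? = some Ordering.gt ∧
    ∃ i < j, w[i]? = some Ordering.lt ∧
      ∀ k, i < k → k < j → w[k]? = some Ordering.eq}

lemma nbPeak_def (w : List Ordering) : nbPeak w = (peakSet w).ncard := rfl

lemma peakSet_subset (w : List Ordering) : peakSet w ⊆ Set.Iio w.length :=
  fun _ hj => (List.getElem?_eq_some_iff.mp hj.1).1

lemma peakSet_finite (w : List Ordering) : (peakSet w).Finite :=
  (Set.finite_Iio _).subset (peakSet_subset w)

lemma peakSet_concat (w : List Ordering) (c : Ordering) :
    peakSet (w ++ [c]) =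
      if armedL w && (c == Ordering.gt) then insert w.length (peakSet w)
      else peakSet w := by
  ext j
  rcases lt_trichotomy j w.length with hj | hj | hj
  · have key : j ∈ peakSet (w ++ [c]) ↔ j ∈ peakSet w := by
      unfold peakSet
      simp only [Set.mem_setOf_eq]
      constructor
      · rintro ⟨h1, i, hij, h2, h3⟩
        rw [List.getElem?_append_left hj] at h1
        rw [List.getElem?_append_left (hij.trans hj)] at h2
        exact ⟨h1, i, hij, h2, fun k hk hk' => by
          have := h3 k hk hk'
          rwa [List.getElem?_append_left (hk'.trans hj)] at this⟩
      · rintro ⟨h1, i, hij, h2, h3⟩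
        exact ⟨by rw [List.getElem?_append_left hj]; exact h1,
          i, hij, by rw [List.getElem?_append_left (hij.trans hj)]; exact h2,
          fun k hk hk' => by
            rw [List.getElem?_append_left (hk'.trans hj)]; exact h3 k hk hk'⟩
    rw [key]
    split_ifs with h
    · constructor
      · exact fun h' => Set.mem_insert_of_mem _ h'
      · intro h'
        rcases Set.mem_insert_iff.mp h' with h'' | h''
        · omega
        · exact h''
    · exact Iff.rfl
  · subst hj
    have hmem : w.length ∈ peakSet (w ++ [c]) ↔ (c = Ordering.gt ∧ armedL w = true) := by
      unfold peakSet
      simp only [Set.mem_setOf_eq, List.getElem?_concat_length]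
      constructor
      · rintro ⟨h1, i, hij, h2, h3⟩
        refine ⟨by simpa using h1, (armed_iff w).mpr ⟨i, ?_, ?_⟩⟩
        · rwa [List.getElem?_append_left hij] at h2
        · intro k hk hk'
          have := h3 k hk hk'
          rwa [List.getElem?_append_left hk'] at this
      · rintro ⟨h1, h2⟩
        obtain ⟨i, hi, hall⟩ := (armed_iff w).mp h2
        have hil : i < w.length := (List.getElem?_eq_some_iff.mp hi).1
        refine ⟨by simp [h1], i, hil,
          by rw [List.getElem?_append_left hil]; exact hi, ?_⟩
        intro k hk hk'
        rw [List.getElem?_append_left hk']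
        exact hall k hk hk'
    rw [hmem]
    split_ifs with h
    · constructor
      · intro _; exact Set.mem_insert _ _
      · intro _
        obtain ⟨ha', hc'⟩ := (Bool.and_eq_true _ _).mp h
        have hcgt : c = Ordering.gt := by
          cases c <;> first | rfl | exact absurd hc' (by decide)
        exact ⟨hcgt, ha'⟩
    · constructor
      · intro hc
        exfalso
        apply h
        rw [hc.2, hc.1]
        decide
      · intro hc
        exact absurd (Set.mem_Iio.mp (peakSet_subset w hc)) (lt_irrefl _)
  · have h1 : (w ++ [c])[j]? = none := by
      apply List.getElem?_eq_none
      simp only [List.length_append, List.length_singleton]; omega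
    constructor
    · intro hc
      have hgt := hc.1
      rw [h1] at hgt
      simp at hgt
    · intro hc
      exfalso
      split_ifs at hc with h
      · rcases Set.mem_insert_iff.mp hc with h'' | h''
        · omega
        · have := peakSet_subset w h''; simp only [Set.mem_Iio] at this; omega
      · have := peakSet_subset w hc; simp only [Set.mem_Iio] at this; omega

lemma nbPeak_eq_cnt (w : List Ordering) : nbPeak w = cnt w := by
  induction w using List.reverseRecOn with
  | nil =>
    have h : peakSet ([] : List Ordering) = ∅ := by
      ext j; simp [peakSet]
    simp [nbPeak_def, h, cnt]
  | append_singleton w c ih =>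
    rw [nbPeak_def, peakSet_concat, cnt_concat]
    split_ifs with h
    · rw [Set.ncard_insert_of_notMem
        (fun hmem => absurd (Set.mem_Iio.mp (peakSet_subset w hmem)) (lt_irrefl _))
        (peakSet_finite w)]
      rw [← nbPeak_def, ih]
    · rw [← nbPeak_def, ih]

def gap (w : List Ordering) : ℤ := ((w.length / 2 : ℕ) : ℤ) - (cnt w : ℤ)

def psi (w : List Ordering) : ℤ :=
  gap w - (if Even w.length ∧ armedL w = true then 1 else 0)

lemma psi_le_gap (w : List Ordering) : psi w ≤ gap w := by
  unfold psi; split_ifs <;> omega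

lemma gap_le_psi_add_one (w : List Ordering) : gap w ≤ psi w + 1 := by
  unfold psi; split_ifs <;> omega

lemma gap_concat (w : List Ordering) (c : Ordering) :
    gap (w ++ [c]) = gap w + (if Even w.length then 0 else 1)
      - (if armedL w && (c == Ordering.gt) then 1 else 0) := by
  unfold gap
  rw [cnt_concat]
  have hl : (w ++ [c]).length = w.length + 1 := by simp
  rw [hl]
  have hlen : ((w.length + 1) / 2 : ℕ) = w.length / 2 + (if Even w.length then 0 else 1) := by
    by_cases h : Even w.length
    · rw [if_pos h]; obtain ⟨m, hm⟩ := h; omega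
    · rw [if_neg h]; rw [Nat.not_even_iff] at h; omega
  rw [hlen]
  by_cases h1 : Even w.length <;> by_cases h2 : armedL w && (c == Ordering.gt) <;>
    simp only [h1, h2, if_pos, if_neg, if_true, if_false, not_false_iff] <;>
    push_cast <;> ring

lemma psi_concat_ge (w : List Ordering) (c : Ordering) : psi w ≤ psi (w ++ [c]) := by
  unfold psi
  rw [gap_concat, armedL_concat]
  have hl : (w ++ [c]).length = w.length + 1 := by simp
  rw [hl]
  by_cases hp : Even w.length <;> cases ha : armedL w <;> cases c <;>
    simp [hp, ha, astep, Nat.even_add_one] <;> split_ifs <;>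
    first | omega | contradiction

lemma psi_nonneg (w : List Ordering) : 0 ≤ psi w := by
  induction w using List.reverseRecOn with
  | nil => simp [psi, gap, cnt, armedL]
  | append_singleton w c ih => exact le_trans ih (psi_concat_ge w c)

lemma gap_nonneg (w : List Ordering) : 0 ≤ gap w :=
  le_trans (psi_nonneg w) (psi_le_gap w)

def gnext (δ : ℕ) (p a : Bool) (g : ℕ) (c : Ordering) : ℕ :=
  if g = δ + 2 then δ + 2
  else min (if a && (c == Ordering.gt) then (if p then g - 1 else g)
            else (if p then g else g + 1)) (δ + 2)

lemma gnext_lt (δ : ℕ) (p a : Bool) (g : ℕ) (c : Ordering) :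
    gnext δ p a g c < δ + 3 := by
  unfold gnext; split_ifs <;> omega

def gapDFA (δ : ℕ) : DFA Ordering (Bool × Bool × Fin (δ + 3)) where
  step s c := (!s.1, astep s.2.1 c, ⟨gnext δ s.1 s.2.1 s.2.2.1 c, gnext_lt δ s.1 s.2.1 s.2.2.1 c⟩)
  start := (true, false, ⟨0, by omega⟩)
  accept := {s | s.2.2.1 = δ}

lemma gapDFA_inv (δ : ℕ) (w : List Ordering) :
    ((gapDFA δ).evalFrom (gapDFA δ).start w).1 = decide (Even w.length) ∧
    ((gapDFA δ).evalFrom (gapDFA δ).start w).2.1 = armedL w ∧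
    ((((gapDFA δ).evalFrom (gapDFA δ).start w).2.2.1 ≤ δ + 1 ∧
        gap w = ((((gapDFA δ).evalFrom (gapDFA δ).start w).2.2.1 : ℕ) : ℤ)) ∨
      (((gapDFA δ).evalFrom (gapDFA δ).start w).2.2.1 = δ + 2 ∧
        (δ : ℤ) + 1 ≤ psi w)) := by
  induction w using List.reverseRecOn with
  | nil =>
    refine ⟨by simp [gapDFA, DFA.evalFrom], by simp [gapDFA, DFA.evalFrom, armedL], Or.inl ⟨?_, ?_⟩⟩
    · simp [gapDFA, DFA.evalFrom]
    · simp [gapDFA, DFA.evalFrom, gap, cnt]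
  | append_singleton w c ih =>
    obtain ⟨h1, h2, h3⟩ := ih
    rw [DFA.evalFrom_append_singleton]
    set s := (gapDFA δ).evalFrom (gapDFA δ).start w with hs
    have hstep1 : ((gapDFA δ).step s c).1 = !s.1 := rfl
    have hstep2 : ((gapDFA δ).step s c).2.1 = astep s.2.1 c := rfl
    have hstep3 : (((gapDFA δ).step s c).2.2 : ℕ) = gnext δ s.1 s.2.1 s.2.2.1 c := rfl
    refine ⟨?_, ?_, ?_⟩
    · rw [hstep1, h1]
      have hll : (w ++ [c]).length = w.length + 1 := by simp
      have hde : decide (Even (w.length + 1)) = !decide (Even w.length) := by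
        by_cases h : Even w.length
        · simp [h, Nat.even_add_one]
        · simp [h, Nat.even_add_one]
      simp only [hll, hde]
    · rw [hstep2, h2, armedL_concat]
    · rw [hstep3, h1, h2]
      have hgap := gap_concat w c
      have hpsi' := psi_concat_ge w c
      have hgap_le := gap_le_psi_add_one (w ++ [c])
      have hpsi_le := psi_le_gap (w ++ [c])
      have hnn := psi_nonneg (w ++ [c])
      rcases h3 with ⟨hle, heq⟩ | ⟨heq2, hψ⟩
      · set g := (s.2.2 : ℕ) with hg
        have hne : ¬ (g = δ + 2) := by omega
        by_cases hpk : armedL w && (c == Ordering.gt) <;> by_cases hp : Even w.length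
        · -- peak at even length: dip
          have hgap' : gap (w ++ [c]) = (g : ℤ) - 1 := by
            rw [hgap, heq]; simp [hp, hpk]
          have hg1 : 1 ≤ g := by omega
          have hgv : gnext δ (decide (Even w.length)) (armedL w) g c = g - 1 := by
            unfold gnext
            rw [if_neg hne, if_pos hpk, if_pos (by simpa using hp)]
            omega
          rw [hgv]
          exact Or.inl ⟨by omega, by omega⟩
        · -- peak at odd length
          have hgap' : gap (w ++ [c]) = (g : ℤ) := by
            rw [hgap, heq]; simp [hp, hpk]
          have hgv : gnext δ (decide (Even w.length)) (armedL w) g c = g := by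
            unfold gnext
            rw [if_neg hne, if_pos hpk, if_neg (by simpa using hp)]
            omega
          rw [hgv]
          exact Or.inl ⟨by omega, by omega⟩
        · -- no peak, even length
          have hgap' : gap (w ++ [c]) = (g : ℤ) := by
            rw [hgap, heq]; simp [hp, hpk]
          have hgv : gnext δ (decide (Even w.length)) (armedL w) g c = g := by
            unfold gnext
            rw [if_neg hne, if_neg hpk, if_pos (by simpa using hp)]
            omega
          rw [hgv]
          exact Or.inl ⟨by omega, by omega⟩
        · -- no peak, odd length
          have hgap' : gap (w ++ [c]) = (g : ℤ) + 1 := by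
            rw [hgap, heq]; simp [hp, hpk]
          have hgv : gnext δ (decide (Even w.length)) (armedL w) g c = min (g + 1) (δ + 2) := by
            unfold gnext
            rw [if_neg hne, if_neg hpk, if_neg (by simpa using hp)]
          rw [hgv]
          by_cases hcap : g + 1 ≤ δ + 1
          · refine Or.inl ⟨by omega, ?_⟩
            have hmin : min (g + 1) (δ + 2) = g + 1 := by omega
            rw [hmin, hgap']
            push_cast
            ring
          · refine Or.inr ⟨by omega, ?_⟩
            have : gap (w ++ [c]) = (δ : ℤ) + 2 := by rw [hgap']; omega
            omega
      · rw [gnext, if_pos heq2]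
        exact Or.inr ⟨rfl, le_trans hψ hpsi'⟩

end GapNbPeak

/-- For every natural number `δ`, the language
`{ w ∈ Σ* : nb_peak(w) = ⌊|w|/2⌋ − δ }` over `Σ = {<,=,>}` is regular:
it is accepted by a deterministic finite automaton with finitely many states
(the `δ`-gap automaton for `nb_peak`). -/
theorem gap_automaton_exists (δ : ℕ) :
    ∃ (σ : Type) (_ : Fintype σ) (M : DFA Ordering σ),
      ∀ w : List Ordering,
        w ∈ M.accepts ↔ (nbPeak w : ℤ) = ((w.length / 2 : ℕ) : ℤ) - (δ : ℤ) := by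
  refine ⟨Bool × Bool × Fin (δ + 3), inferInstance, GapNbPeak.gapDFA δ, fun w => ?_⟩
  rw [DFA.mem_accepts]
  obtain ⟨-, -, h3⟩ := GapNbPeak.gapDFA_inv δ w
  have hkey : (GapNbPeak.gap w = (δ : ℤ)) ↔
      (nbPeak w : ℤ) = ((w.length / 2 : ℕ) : ℤ) - (δ : ℤ) := by
    rw [GapNbPeak.nbPeak_eq_cnt]
    unfold GapNbPeak.gap
    omega
  rw [← hkey]
  show (((GapNbPeak.gapDFA δ).evalFrom _ w).2.2.1 = δ) ↔ _
  rcases h3 with ⟨hle, heq⟩ | ⟨heq2, hψ⟩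
  · rw [heq]
    constructor
    · intro h; exact_mod_cast congrArg (Nat.cast : ℕ → ℤ) h
    · intro h; exact_mod_cast h
  · rw [heq2]
    constructor
    · intro h; omega
    · intro h
      exfalso
      have := GapNbPeak.psi_le_gap w
      omega
end

section
/- For every integer sequence X of length n ≥ 2, 2 · nb_decreasing_terrace(X) + sum_width_increasing_terrace(X) ≤ n − 2. -/
/-- The factor `w_i ⋯ w_j` of a word `w` (positions indexed from `0`). -/
def factor (w : List Ordering) (i j : ℕ) : List Ordering :=
  (w.drop i).take (j + 1 - i)

/-- The factor `w_i ⋯ w_j` of `w` is an occurrence of the language `L`. -/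
def IsOcc (L : Set (List Ordering)) (w : List Ordering) (i j : ℕ) : Prop :=
  i ≤ j ∧ j < w.length ∧ factor w i j ∈ L

/-- The factor `w_i ⋯ w_j` is a maximal occurrence of `L` in `w`: it is an
occurrence, and no strictly larger factor `w_{i'} ⋯ w_{j'}` with `i' ≤ i` and
`j ≤ j'` is an occurrence of `L`. -/
def IsMaxOcc (L : Set (List Ordering)) (w : List Ordering) (i j : ℕ) : Prop :=
  IsOcc L w i j ∧
    ∀ i' j', i' ≤ i → j ≤ j' → (i', j') ≠ (i, j) → ¬ IsOcc L w i' j'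

/-- The number of maximal occurrences of the language `L` in the word `w`. -/
noncomputable def nbOcc (L : Set (List Ordering)) (w : List Ordering) : ℕ :=
  {p : ℕ × ℕ | IsMaxOcc L w p.1 p.2}.ncard

/-- The sum, over all maximal occurrences `w_i ⋯ w_j` of `L` in `w`, of the
width `wid i j` of the occurrence (`0` if there are none). -/
noncomputable def sumWidth (L : Set (List Ordering)) (wid : ℕ → ℕ → ℕ)
    (w : List Ordering) : ℕ :=
  ∑ᶠ p ∈ {p : ℕ × ℕ | IsMaxOcc L w p.1 p.2}, wid p.1 p.2

/-- The language of `DECREASING_TERRACE = > =⁺ >`. -/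
def DecreasingTerraceLang : Set (List Ordering) :=
  {w | ∃ k : ℕ, 1 ≤ k ∧
    w = Ordering.gt :: (List.replicate k Ordering.eq ++ [Ordering.gt])}

/-- The language of `INCREASING_TERRACE = < =⁺ <`. -/
def IncreasingTerraceLang : Set (List Ordering) :=
  {w | ∃ k : ℕ, 1 ≤ k ∧
    w = Ordering.lt :: (List.replicate k Ordering.eq ++ [Ordering.lt])}

def Lang (a : Ordering) : Set (List Ordering) :=
  {w | ∃ k : ℕ, 1 ≤ k ∧ w = a :: (List.replicate k Ordering.eq ++ [a])}

lemma factor_getElem? (w : List Ordering) (i j t : ℕ) (ht : t < j + 1 - i) :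
    (factor w i j)[t]? = w[i + t]? := by
  unfold factor
  rw [List.getElem?_take, if_pos ht, List.getElem?_drop]

lemma model_getElem? (a : Ordering) (k t : ℕ) :
    (a :: (List.replicate k Ordering.eq ++ [a]))[t]? =
      if t = 0 then some a else if t ≤ k then some Ordering.eq
      else if t = k + 1 then some a else none := by
  rcases Nat.eq_zero_or_pos t with rfl | ht
  · simp
  · obtain ⟨s, rfl⟩ : ∃ s, t = s + 1 := ⟨t - 1, by omega⟩
    simp only [List.getElem?_cons_succ]
    rcases lt_trichotomy s k with h | rfl | h
    · rw [List.getElem?_append_left (by simpa), List.getElem?_replicate, if_pos h,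
        if_neg (by omega), if_pos (by omega)]
    · rw [List.getElem?_append_right (by simp), if_neg (by omega), if_neg (by omega),
        if_pos rfl]
      simp
    · rw [List.getElem?_append_right (by simpa using h.le)]
      rw [if_neg (by omega), if_neg (by omega), if_neg (by omega)]
      rw [List.getElem?_eq_none]
      simp only [List.length_replicate, List.length_append, List.length_cons,
        List.length_nil]
      omega

lemma occ_spec {a : Ordering} {w : List Ordering} {i j : ℕ}
    (h : IsOcc (Lang a) w i j) :
    i + 2 ≤ j ∧ j < w.length ∧ w[i]? = some a ∧ w[j]? = some a ∧
      ∀ t, i < t → t < j → w[t]? = some Ordering.eq := by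
  obtain ⟨hij, hjm, k, hk, hfac⟩ := h
  have hlen : (factor w i j).length = j + 1 - i := by
    unfold factor
    simp only [List.length_take, List.length_drop]
    omega
  have hlen2 : (factor w i j).length = k + 2 := by
    rw [hfac]; simp
  have hkj : j = i + (k + 1) := by omega
  have key : ∀ t, t < j + 1 - i →
      w[i + t]? = (a :: (List.replicate k Ordering.eq ++ [a]))[t]? := by
    intro t ht
    rw [← factor_getElem? w i j t ht, hfac]
  refine ⟨by omega, hjm, ?_, ?_, ?_⟩
  · have := key 0 (by omega)
    rw [model_getElem?] at this
    simpa using this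
  · have := key (k + 1) (by omega)
    rw [model_getElem?, if_neg (by omega), if_neg (by omega), if_pos rfl] at this
    rwa [← hkj] at this
  · intro t h1 h2
    have := key (t - i) (by omega)
    rw [model_getElem?, if_neg (by omega), if_pos (by omega)] at this
    rwa [show i + (t - i) = t by omega] at this

lemma occ_of_spec {a : Ordering} {w : List Ordering} {i j : ℕ}
    (hij : i + 2 ≤ j) (hjm : j < w.length)
    (hi : w[i]? = some a) (hj : w[j]? = some a)
    (hmid : ∀ t, i < t → t < j → w[t]? = some Ordering.eq) :
    IsOcc (Lang a) w i j := by
  refine ⟨by omega, hjm, j - i - 1, by omega, ?_⟩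
  have hlen : (factor w i j).length = j + 1 - i := by
    unfold factor
    simp only [List.length_take, List.length_drop]
    omega
  apply List.ext_getElem?
  intro t
  rcases lt_or_ge t (j + 1 - i) with ht | ht
  · rw [factor_getElem? w i j t ht, model_getElem?]
    rcases Nat.eq_zero_or_pos t with rfl | h0
    · simpa using hi
    · rcases eq_or_ne t (j - i) with rfl | hne
      · rw [if_neg (by omega), if_neg (by omega), if_pos (by omega)]
        rwa [show i + (j - i) = j by omega]
      · rw [if_neg (by omega), if_pos (by omega)]
        exact hmid (i + t) (by omega) (by omega)
  · rw [List.getElem?_eq_none (by omega), List.getElem?_eq_none (by simp; omega)]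

lemma maxocc_aux {a b : Ordering} (hb : b ≠ .eq)
    {w : List Ordering} {i j i' j' x : ℕ}
    (hp : IsMaxOcc (Lang a) w i j) (hq : IsMaxOcc (Lang b) w i' j')
    (hii : i ≤ i')
    (h1 : i < x) (h2 : x ≤ j) (h3 : i' < x) (h4 : x ≤ j') :
    (i, j) = (i', j') := by
  obtain ⟨hij2, hjm, hwi, hwj, hmidp⟩ := occ_spec hp.1
  obtain ⟨hij2', hjm', hwi', hwj', hmidq⟩ := occ_spec hq.1
  have hi'j : i' < j := by omega
  rcases eq_or_lt_of_le hii with rfl | hlt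
  · have hab : a = b := by
      rw [hwi] at hwi'
      exact Option.some_injective _ hwi'
    subst hab
    rcases lt_trichotomy j j' with hj | rfl | hj
    · exfalso
      refine hp.2 i j' le_rfl hj.le (by simp; omega) ?_
      exact occ_of_spec (by omega) hjm' hwi' hwj' hmidq
    · rfl
    · exfalso
      refine hq.2 i j le_rfl hj.le (by simp; omega) ?_
      exact occ_of_spec (by omega) hjm hwi hwj hmidp
  · exfalso
    have heq := hmidp i' hlt hi'j
    rw [hwi'] at heq
    exact hb (Option.some_injective _ heq)

lemma dec_eq_lang : DecreasingTerraceLang = Lang .gt := rfl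
lemma inc_eq_lang : IncreasingTerraceLang = Lang .lt := rfl

/-- For every integer sequence `X` of length `n ≥ 2`,
`2 · nb_decreasing_terrace(X) + sum_width_increasing_terrace(X) ≤ n − 2`
(a maximal occurrence `S_i ⋯ S_j` of `INCREASING_TERRACE` has width `j − i`). -/
theorem decTerrace_incTerrace_le (X : List ℤ) (hX : 2 ≤ X.length) :
    2 * nbOcc DecreasingTerraceLang (signature X) +
      sumWidth IncreasingTerraceLang (fun i j => j - i) (signature X) ≤
      X.length - 2 := by
  classical
  set w := signature X with hw
  have hm : w.length = X.length - 1 := by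
    simp only [hw, signature, List.length_zipWith, List.length_tail]
    omega
  set m := w.length with hmdef
  have hsub : ∀ (L : Set (List Ordering)),
      {p : ℕ × ℕ | IsMaxOcc L w p.1 p.2} ⊆
        ↑(Finset.range m ×ˢ Finset.range m) := by
    intro L p hp
    obtain ⟨⟨hle, hlt, _⟩, _⟩ := hp
    simp only [Finset.coe_product, Set.mem_prod, Finset.mem_coe, Finset.mem_range]
    omega
  have hd : {p : ℕ × ℕ | IsMaxOcc DecreasingTerraceLang w p.1 p.2}.Finite :=
    Set.Finite.subset (Finset.finite_toSet _) (hsub _)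
  have hi : {p : ℕ × ℕ | IsMaxOcc IncreasingTerraceLang w p.1 p.2}.Finite :=
    Set.Finite.subset (Finset.finite_toSet _) (hsub _)
  set Fd := hd.toFinset with hFddef
  set Fi := hi.toFinset with hFidef
  have hnb : nbOcc DecreasingTerraceLang w = Fd.card := by
    rw [nbOcc, ← Set.ncard_coe_finset, Set.Finite.coe_toFinset]
  have hsw : sumWidth IncreasingTerraceLang (fun i j => j - i) w
      = ∑ p ∈ Fi, (p.2 - p.1) := by
    rw [sumWidth, ← Set.Finite.coe_toFinset hi, finsum_mem_coe_finset]
  have hFd : ∀ p ∈ Fd, IsMaxOcc (Lang .gt) w p.1 p.2 := by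
    intro p hp
    rw [hFddef, Set.Finite.mem_toFinset] at hp
    exact hp
  have hFi : ∀ p ∈ Fi, IsMaxOcc (Lang .lt) w p.1 p.2 := by
    intro p hp
    rw [hFidef, Set.Finite.mem_toFinset] at hp
    exact hp
  have hdisjFF : Disjoint Fd Fi := by
    rw [Finset.disjoint_left]
    intro p hpd hpi
    have h1 := (occ_spec (hFd p hpd).1).2.2.1
    have h2 := (occ_spec (hFi p hpi).1).2.2.1
    rw [h1] at h2
    exact absurd (Option.some_injective _ h2) (by decide)
  set F := Fd ∪ Fi with hFdef
  have hF : ∀ p ∈ F, ∃ a : Ordering, a ≠ .eq ∧ IsMaxOcc (Lang a) w p.1 p.2 := by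
    intro p hp
    rcases Finset.mem_union.mp hp with h | h
    · exact ⟨.gt, by decide, hFd p h⟩
    · exact ⟨.lt, by decide, hFi p h⟩
  have hpd : ∀ p ∈ F, ∀ q ∈ F, p ≠ q →
      Disjoint (Finset.Ioc p.1 p.2) (Finset.Ioc q.1 q.2) := by
    intro p hp q hq hne
    by_contra hcon
    obtain ⟨x, hx1, hx2⟩ := Finset.not_disjoint_iff.mp hcon
    rw [Finset.mem_Ioc] at hx1 hx2
    obtain ⟨a, ha, hpa⟩ := hF p hp
    obtain ⟨b, hb, hqb⟩ := hF q hq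
    rcases le_total p.1 q.1 with h | h
    · have h12 := maxocc_aux hb hpa hqb h hx1.1 hx1.2 hx2.1 hx2.2
      rw [Prod.mk.injEq] at h12
      exact hne (Prod.ext h12.1 h12.2)
    · have h12 := maxocc_aux ha hqb hpa h hx2.1 hx2.2 hx1.1 hx1.2
      rw [Prod.mk.injEq] at h12
      exact hne (Prod.ext h12.1.symm h12.2.symm)
  rw [hnb, hsw]
  calc 2 * Fd.card + ∑ p ∈ Fi, (p.2 - p.1)
      = ∑ _p ∈ Fd, 2 + ∑ p ∈ Fi, (p.2 - p.1) := by
        rw [Finset.sum_const, smul_eq_mul, mul_comm]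
    _ ≤ ∑ p ∈ Fd, (p.2 - p.1) + ∑ p ∈ Fi, (p.2 - p.1) := by
        apply Nat.add_le_add_right
        apply Finset.sum_le_sum
        intro p hp
        have := (occ_spec (hFd p hp).1).1
        omega
    _ = ∑ p ∈ F, (p.2 - p.1) := (Finset.sum_union hdisjFF).symm
    _ = ∑ p ∈ F, (Finset.Ioc p.1 p.2).card := by simp [Nat.card_Ioc]
    _ = (F.biUnion fun p => Finset.Ioc p.1 p.2).card := (Finset.card_biUnion hpd).symm
    _ ≤ (Finset.Ico 1 m).card := by
        apply Finset.card_le_card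
        intro x hx
        obtain ⟨p, hp, hxp⟩ := Finset.mem_biUnion.mp hx
        rw [Finset.mem_Ioc] at hxp
        obtain ⟨a, ha, hpa⟩ := hF p hp
        have hjm := (occ_spec hpa.1).2.1
        rw [Finset.mem_Ico]
        omega
    _ = m - 1 := by rw [Nat.card_Ico]
    _ ≤ X.length - 2 := by omega
end

section
/- For every integer sequence X of length n, if nb_decreasing_terrace(X) ≥ 1 and sum_width_increasing_terrace(X) ≥ 1, then 2 · nb_decreasing_terrace(X) + sum_width_increasing_terrace(X) ≤ n − 3. -/
def Spec (w : List Ordering) (a : Ordering) (i j : ℕ) : Prop :=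
  i + 2 ≤ j ∧ w[i]? = some a ∧ w[j]? = some a ∧
    ∀ t, i < t → t < j → w[t]? = some Ordering.eq

lemma spec_of_occ {w : List Ordering} {a : Ordering} {i j : ℕ}
    (hij : i ≤ j) (hj : j < w.length) (k : ℕ) (hk : 1 ≤ k)
    (hfac : factor w i j = a :: (List.replicate k Ordering.eq ++ [a])) :
    Spec w a i j := by
  have hlen : (factor w i j).length = j + 1 - i := by
    unfold factor
    rw [List.length_take, List.length_drop]
    omega
  rw [hfac] at hlen
  simp [List.length_replicate] at hlen
  have hji : j = i + k + 1 := by omega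
  have hget : ∀ t, t < j + 1 - i →
      w[i + t]? = (a :: (List.replicate k Ordering.eq ++ [a]))[t]? := by
    intro t ht
    rw [← factor_getElem? w i j t ht, hfac]
  refine ⟨by omega, ?_, ?_, ?_⟩
  · have := hget 0 (by omega)
    simpa using this
  · have := hget (k + 1) (by omega)
    rw [show i + (k+1) = j by omega] at this
    rw [this]
    simp [List.getElem?_append_right, List.length_replicate]
  · intro t h1 h2
    have := hget (t - i) (by omega)
    rw [show i + (t - i) = t by omega] at this
    rw [this]
    have h3 : t - i - 1 < k := by omega
    rw [List.getElem?_cons]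
    simp only [if_neg (by omega : ¬ (t - i = 0))]
    rw [List.getElem?_append_left (by simpa using h3)]
    simp [h3]

lemma spec_of_isOcc_dec {w : List Ordering} {i j : ℕ}
    (h : IsOcc DecreasingTerraceLang w i j) : Spec w Ordering.gt i j := by
  obtain ⟨hij, hj, k, hk, hfac⟩ := h
  exact spec_of_occ hij hj k hk hfac

lemma spec_of_isOcc_inc {w : List Ordering} {i j : ℕ}
    (h : IsOcc IncreasingTerraceLang w i j) : Spec w Ordering.lt i j := by
  obtain ⟨hij, hj, k, hk, hfac⟩ := h
  exact spec_of_occ hij hj k hk hfac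

lemma spec_aux {w : List Ordering} {a b : Ordering} {i j i' j' : ℕ}
    (ha : Spec w a i j) (hb : Spec w b i' j') (hbE : b ≠ Ordering.eq)
    (hlt : i < i') : j ≤ i' := by
  by_contra h
  push_neg at h
  have h1 := ha.2.2.2 i' hlt h
  have h2 := hb.2.1
  rw [h1] at h2
  exact hbE (Option.some.inj h2).symm

lemma spec_disjoint {w : List Ordering} {a b : Ordering} {i j i' j' : ℕ}
    (ha : Spec w a i j) (hb : Spec w b i' j')
    (haE : a ≠ Ordering.eq) (hbE : b ≠ Ordering.eq)
    (hne : (i, j) ≠ (i', j')) :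
    Disjoint (Finset.Ioc i j) (Finset.Ioc i' j') := by
  rcases lt_trichotomy i i' with h | h | h
  · have := spec_aux ha hb hbE h
    rw [Finset.disjoint_left]
    intro t ht ht'
    simp only [Finset.mem_Ioc] at ht ht'
    omega
  · subst h
    have hj : j = j' := by
      rcases lt_trichotomy j j' with hj | hj | hj
      · have := hb.2.2.2 j (by have := ha.1; omega) hj
        have h2 := ha.2.2.1
        rw [this] at h2
        exact absurd (Option.some.inj h2).symm haE
      · exact hj
      · have := ha.2.2.2 j' (by have := hb.1; omega) hj
        have h2 := hb.2.2.1
        rw [this] at h2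
        exact absurd (Option.some.inj h2).symm hbE
    exact absurd (by rw [hj]) hne
  · have := spec_aux hb ha haE h
    rw [Finset.disjoint_left]
    intro t ht ht'
    simp only [Finset.mem_Ioc] at ht ht'
    omega

lemma spec_left_notMem {w : List Ordering} {a b : Ordering} {i j i' j' : ℕ}
    (ha : Spec w a i j) (hb : Spec w b i' j')
    (hab : a ≠ b) (haE : a ≠ Ordering.eq) :
    i ∉ Finset.Ioc i' j' := by
  intro h
  simp only [Finset.mem_Ioc] at h
  rcases eq_or_lt_of_le h.2 with he | hl
  · have h2 := hb.2.2.1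
    rw [← he] at h2
    rw [ha.2.1] at h2
    exact hab (Option.some.inj h2)
  · have := hb.2.2.2 i h.1 hl
    rw [ha.2.1] at this
    exact haE (Option.some.inj this)

/-- For every integer sequence `X` of length `n`, if `nb_decreasing_terrace(X) ≥ 1`
and `sum_width_increasing_terrace(X) ≥ 1`, then
`2 · nb_decreasing_terrace(X) + sum_width_increasing_terrace(X) ≤ n − 3`. -/
theorem decTerrace_incTerrace_le_of_pos (X : List ℤ) (hX : X ≠ [])
    (h1 : 1 ≤ nbOcc DecreasingTerraceLang (signature X))
    (h2 : 1 ≤ sumWidth IncreasingTerraceLang (fun i j => j - i) (signature X)) :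
    2 * nbOcc DecreasingTerraceLang (signature X) +
      sumWidth IncreasingTerraceLang (fun i j => j - i) (signature X) ≤
      X.length - 3 := by
  set w := signature X with hwdef
  have hwl : w.length + 1 = X.length := by
    rw [hwdef]
    unfold signature
    rw [List.length_zipWith, List.length_tail]
    have : X.length ≠ 0 := fun h => hX (List.length_eq_zero_iff.mp h)
    omega
  set SD := {p : ℕ × ℕ | IsMaxOcc DecreasingTerraceLang w p.1 p.2} with hSD
  set SI := {p : ℕ × ℕ | IsMaxOcc IncreasingTerraceLang w p.1 p.2} with hSI
  have hsub : ∀ (L : Set (List Ordering)),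
      {p : ℕ × ℕ | IsMaxOcc L w p.1 p.2} ⊆ Set.Iio w.length ×ˢ Set.Iio w.length := by
    intro L p hp
    obtain ⟨⟨hij, hj, _⟩, _⟩ := hp
    exact ⟨by simpa using lt_of_le_of_lt hij hj, by simpa using hj⟩
  have hfinD : SD.Finite :=
    Set.Finite.subset ((Set.finite_Iio _).prod (Set.finite_Iio _)) (hsub _)
  have hfinI : SI.Finite :=
    Set.Finite.subset ((Set.finite_Iio _).prod (Set.finite_Iio _)) (hsub _)
  set D := hfinD.toFinset with hDdef
  set I := hfinI.toFinset with hIdef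
  have hmemD : ∀ p : ℕ × ℕ, p ∈ D ↔ IsMaxOcc DecreasingTerraceLang w p.1 p.2 := by
    intro p; rw [hDdef, Set.Finite.mem_toFinset]; rfl
  have hmemI : ∀ p : ℕ × ℕ, p ∈ I ↔ IsMaxOcc IncreasingTerraceLang w p.1 p.2 := by
    intro p; rw [hIdef, Set.Finite.mem_toFinset]; rfl
  -- rewrite nbOcc and sumWidth
  have hnb : nbOcc DecreasingTerraceLang w = D.card := by
    rw [nbOcc, ← hSD, Set.ncard_eq_toFinset_card _ hfinD]
  have hsw : sumWidth IncreasingTerraceLang (fun i j => j - i) w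
      = ∑ p ∈ I, (p.2 - p.1) := by
    rw [sumWidth, ← hSI, ← hfinI.coe_toFinset, finsum_mem_coe_finset]
  rw [hnb, hsw]
  rw [hnb] at h1
  rw [hsw] at h2
  -- specs
  have hspecD : ∀ p ∈ D, Spec w Ordering.gt p.1 p.2 := fun p hp =>
    spec_of_isOcc_dec ((hmemD p).mp hp).1
  have hspecI : ∀ p ∈ I, Spec w Ordering.lt p.1 p.2 := fun p hp =>
    spec_of_isOcc_inc ((hmemI p).mp hp).1
  -- D and I are disjoint
  have hDI : Disjoint D I := by
    rw [Finset.disjoint_left]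
    intro p hpD hpI
    have hg := (hspecD p hpD).2.1
    have hl := (hspecI p hpI).2.1
    rw [hg] at hl
    exact absurd (Option.some.inj hl) (by decide)
  -- nonemptiness
  have hDne : D.Nonempty := Finset.card_pos.mp h1
  have hIne : I.Nonempty := by
    by_contra h
    rw [Finset.not_nonempty_iff_eq_empty] at h
    rw [h, Finset.sum_empty] at h2
    omega
  obtain ⟨pd, hpdD, hpdmin⟩ := Finset.exists_min_image D Prod.fst hDne
  obtain ⟨pi, hpiI, hpimin⟩ := Finset.exists_min_image I Prod.fst hIne
  -- the big union
  set T := D ∪ I with hTdef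
  have hspecT : ∀ p ∈ T, Spec w Ordering.gt p.1 p.2 ∨ Spec w Ordering.lt p.1 p.2 := by
    intro p hp
    rcases Finset.mem_union.mp hp with h | h
    · exact Or.inl (hspecD p h)
    · exact Or.inr (hspecI p h)
  have hpairwise : ∀ p ∈ T, ∀ q ∈ T, p ≠ q →
      Disjoint (Finset.Ioc p.1 p.2) (Finset.Ioc q.1 q.2) := by
    intro p hp q hq hpq
    have hne : (p.1, p.2) ≠ (q.1, q.2) := by
      intro h
      exact hpq (Prod.ext (congrArg Prod.fst h) (congrArg Prod.snd h))
    rcases hspecT p hp with h1 | h1 <;> rcases hspecT q hq with h2 | h2 <;>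
      exact spec_disjoint h1 h2 (by decide) (by decide) hne
  set B := T.biUnion (fun p => Finset.Ioc p.1 p.2) with hBdef
  have hBcard : B.card = ∑ p ∈ T, (p.2 - p.1) := by
    rw [hBdef, Finset.card_biUnion hpairwise]
    exact Finset.sum_congr rfl fun p _ => Nat.card_Ioc p.1 p.2
  -- pd.1 and pi.1 are not in B
  have hpdB : pd.1 ∉ B := by
    rw [hBdef]
    simp only [Finset.mem_biUnion, not_exists]
    rintro q ⟨hq', hmem⟩
    rcases Finset.mem_union.mp hq' with h | h
    · have := hpdmin q h
      simp only [Finset.mem_Ioc] at hmem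
      omega
    · exact spec_left_notMem (hspecD pd hpdD) (hspecI q h) (by decide) (by decide) hmem
  have hpiB : pi.1 ∉ B := by
    rw [hBdef]
    simp only [Finset.mem_biUnion, not_exists]
    rintro q ⟨hq', hmem⟩
    rcases Finset.mem_union.mp hq' with h | h
    · exact spec_left_notMem (hspecI pi hpiI) (hspecD q h) (by decide) (by decide) hmem
    · have := hpimin q h
      simp only [Finset.mem_Ioc] at hmem
      omega
  have hpdpi : pd.1 ≠ pi.1 := by
    intro h
    have hg := (hspecD pd hpdD).2.1
    have hl := (hspecI pi hpiI).2.1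
    rw [h, hl] at hg
    exact absurd (Option.some.inj hg) (by decide)
  -- the whole thing fits in range w.length
  set U := insert pd.1 (insert pi.1 B) with hUdef
  have hUsub : U ⊆ Finset.range w.length := by
    intro t ht
    rw [Finset.mem_range]
    rw [hUdef] at ht
    simp only [Finset.mem_insert] at ht
    rcases ht with h | h | h
    · subst h
      have h1 := (hspecD pd hpdD).1
      have h2 := ((hmemD pd).mp hpdD).1.2.1
      omega
    · subst h
      have h1 := (hspecI pi hpiI).1
      have h2 := ((hmemI pi).mp hpiI).1.2.1
      omega
    · rw [hBdef] at h
      obtain ⟨q, hq, hmem⟩ := Finset.mem_biUnion.mp h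
      have hq2 : q.2 < w.length := by
        rcases Finset.mem_union.mp hq with h | h
        · exact ((hmemD q).mp h).1.2.1
        · exact ((hmemI q).mp h).1.2.1
      simp only [Finset.mem_Ioc] at hmem
      omega
  have hUcard : U.card = 2 + B.card := by
    rw [hUdef]
    rw [Finset.card_insert_of_notMem, Finset.card_insert_of_notMem hpiB]
    · omega
    · simp only [Finset.mem_insert, not_or]
      exact ⟨hpdpi, hpdB⟩
  have hUle : U.card ≤ w.length := by
    have := Finset.card_le_card hUsub
    simpa using this
  -- sum over T
  have hsplit : ∑ p ∈ T, (p.2 - p.1) = ∑ p ∈ D, (p.2 - p.1) + ∑ p ∈ I, (p.2 - p.1) := by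
    rw [hTdef, Finset.sum_union hDI]
  have hDsum : 2 * D.card ≤ ∑ p ∈ D, (p.2 - p.1) := by
    calc 2 * D.card = ∑ _p ∈ D, 2 := by rw [Finset.sum_const, smul_eq_mul, mul_comm]
    _ ≤ ∑ p ∈ D, (p.2 - p.1) := Finset.sum_le_sum fun p hp => by
        have := (hspecD p hp).1; omega
  omega
end

section
/- For every integer sequence X, if sum_width_decreasing_sequence(X) = sum_width_zigzag(X), then this common value is even; equivalently, there is no integer sequence X with sum_width_decreasing_sequence(X) odd and sum_width_decreasing_sequence(X) = sum_width_zigzag(X). -/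
/-- The language of `DECREASING_SEQUENCE = (>(>|=)*)*>`: the nonempty words
over `{>,=}` that begin and end with `>`. -/
def DecreasingSequenceLang : Set (List Ordering) :=
  {w | w ≠ [] ∧ (∀ a ∈ w, a = Ordering.gt ∨ a = Ordering.eq) ∧
    w.head? = some Ordering.gt ∧ w.getLast? = some Ordering.gt}

/-- `sum_width_decreasing_sequence(X)`: each maximal occurrence `S_i ⋯ S_j` of
`DECREASING_SEQUENCE` in the signature of `X` contributes width `j − i + 2`. -/
noncomputable def sumWidthDecreasingSequence (X : List ℤ) : ℕ :=
  sumWidth DecreasingSequenceLang (fun i j => j - i + 2) (signature X)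

/-- The language of `ZIGZAG = (<>)⁺<(>|ε) | (><)⁺>(<|ε)`: the strictly
alternating words over `{<,>}` of length at least `3`. -/
def ZigzagLang : Set (List Ordering) :=
  {w | 3 ≤ w.length ∧ ∀ k : ℕ, k + 1 < w.length →
    (w[k]? = some Ordering.lt ∧ w[k + 1]? = some Ordering.gt) ∨
    (w[k]? = some Ordering.gt ∧ w[k + 1]? = some Ordering.lt)}

/-- `sum_width_zigzag(X)`: each maximal occurrence `S_i ⋯ S_j` of `ZIGZAG`
in the signature of `X` contributes width `j − i`. -/
noncomputable def sumWidthZigzag (X : List ℤ) : ℕ :=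
  sumWidth ZigzagLang (fun i j => j - i) (signature X)

open Finset

section Factor

variable {w : List Ordering} {i j k : ℕ}

lemma length_factor (hj : j < w.length) : (factor w i j).length = j + 1 - i := by
  simp only [factor, List.length_take, List.length_drop]; omega

lemma getElem?_factor (hk : k < j + 1 - i) : (factor w i j)[k]? = w[i + k]? := by
  simp [factor, hk, List.getElem?_drop]

lemma getElem?_factor_sub (hik : i ≤ k) (hkj : k ≤ j) : (factor w i j)[k - i]? = w[k]? := by
  rw [getElem?_factor (by omega), Nat.add_sub_cancel' hik]

lemma mem_factor_iff (hj : j < w.length) {a : Ordering} :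
    a ∈ factor w i j ↔ ∃ k, i ≤ k ∧ k ≤ j ∧ w[k]? = some a := by
  rw [List.mem_iff_getElem?]
  constructor
  · rintro ⟨n, hn⟩
    have hn_lt : n < j + 1 - i := by
      by_contra! hle
      rw [List.getElem?_eq_none (by rw [length_factor hj]; exact hle)] at hn
      simp at hn
    exact ⟨i + n, by omega, by omega, getElem?_factor hn_lt ▸ hn⟩
  · rintro ⟨k, hik, hkj, hk⟩
    exact ⟨k - i, getElem?_factor_sub hik hkj ▸ hk⟩

end Factor

section MaximalOccurrences

variable {L : Set (List Ordering)} {w : List Ordering}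

lemma IsOcc.exists_isMaxOcc {i j : ℕ} (h : IsOcc L w i j) :
    ∃ i₀ j₀, IsMaxOcc L w i₀ j₀ ∧ i₀ ≤ i ∧ j ≤ j₀ := by
  by_cases hmax : IsMaxOcc L w i j
  · exact ⟨i, j, hmax, le_rfl, le_rfl⟩
  obtain ⟨i', j', hi, hj, hne, h'⟩ :
      ∃ i' j', i' ≤ i ∧ j ≤ j' ∧ (i', j') ≠ (i, j) ∧ IsOcc L w i' j' := by
    simpa [IsMaxOcc, h] using hmax
  have hwider : i' < i ∨ j < j' := by
    by_contra!
    exact hne (Prod.ext (by omega) (by omega))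
  obtain ⟨i₀, j₀, hmax₀, hi₀, hj₀⟩ := h'.exists_isMaxOcc
  exact ⟨i₀, j₀, hmax₀, hi₀.trans hi, hj.trans hj₀⟩
termination_by w.length + i - j
decreasing_by have := h'.2.1; omega

lemma IsMaxOcc.eq_of_isOcc_max {i₁ j₁ i₂ j₂ : ℕ} (h₁ : IsMaxOcc L w i₁ j₁)
    (h₂ : IsMaxOcc L w i₂ j₂) (hi : i₁ ≤ i₂) (hglue : IsOcc L w i₁ (max j₁ j₂)) :
    (i₁, j₁) = (i₂, j₂) := by
  have hsame : (i₁, max j₁ j₂) = (i₂, j₂) := by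
    by_contra hne
    exact h₂.2 i₁ (max j₁ j₂) hi (le_max_right _ _) hne hglue
  simp only [Prod.mk.injEq, max_eq_right_iff] at hsame
  by_contra hne
  exact h₁.2 i₂ j₂ hsame.1.ge hsame.2 (Ne.symm hne) h₂.1

lemma setOf_isMaxOcc_finite (L : Set (List Ordering)) (w : List Ordering) :
    {p : ℕ × ℕ | IsMaxOcc L w p.1 p.2}.Finite := by
  refine (Set.finite_Icc (0, 0) (w.length, w.length)).subset fun p hp => ?_
  have := hp.1.1
  have := hp.1.2.1
  simp only [Set.mem_Icc, Prod.le_def]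
  omega

noncomputable def maxOccs (L : Set (List Ordering)) (w : List Ordering) : Finset (ℕ × ℕ) :=
  (setOf_isMaxOcc_finite L w).toFinset

@[simp]
lemma mem_maxOccs {p : ℕ × ℕ} : p ∈ maxOccs L w ↔ IsMaxOcc L w p.1 p.2 := by
  simp [maxOccs]

lemma sumWidth_eq_sum_maxOccs (wid : ℕ → ℕ → ℕ) :
    sumWidth L wid w = ∑ p ∈ maxOccs L w, wid p.1 p.2 := by
  rw [sumWidth, ← finsum_mem_coe_finset, maxOccs, Set.Finite.coe_toFinset]

/-- An occurrence `S_i ⋯ S_j` covers the positions `i + a, …, j + b` of the sequence, so the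
widths of `DECREASING_SEQUENCE` and `ZIGZAG` count covered positions for `(a, b) = (0, 1)` and
`(1, 0)` respectively. -/
noncomputable def coveredPositions (L : Set (List Ordering)) (a b : ℕ) (w : List Ordering) :
    Finset ℕ :=
  (maxOccs L w).biUnion fun p => Icc (p.1 + a) (p.2 + b)

lemma mem_coveredPositions {a b k : ℕ} :
    k ∈ coveredPositions L a b w ↔ ∃ i j, IsMaxOcc L w i j ∧ i + a ≤ k ∧ k ≤ j + b := by
  simp [coveredPositions]

lemma card_coveredPositions {a b : ℕ}
    (hglue : ∀ {i₁ j₁ i₂ j₂}, IsOcc L w i₁ j₁ → IsOcc L w i₂ j₂ → i₁ ≤ i₂ →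
      i₂ + a ≤ j₁ + b → IsOcc L w i₁ (max j₁ j₂)) :
    (coveredPositions L a b w).card = ∑ p ∈ maxOccs L w, (p.2 + b + 1 - (p.1 + a)) := by
  rw [coveredPositions, card_biUnion]
  · simp only [Nat.card_Icc]
  rintro ⟨i₁, j₁⟩ h₁ ⟨i₂, j₂⟩ h₂ hne
  rw [mem_coe, mem_maxOccs] at h₁ h₂
  rw [Function.onFun, disjoint_left]
  intro k hk₁ hk₂
  rw [mem_Icc] at hk₁ hk₂
  rcases le_total i₁ i₂ with hi | hi
  · exact hne (h₁.eq_of_isOcc_max h₂ hi (hglue h₁.1 h₂.1 hi (by omega)))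
  · exact hne (h₂.eq_of_isOcc_max h₁ hi (hglue h₂.1 h₁.1 hi (by omega))).symm

end MaximalOccurrences

section Languages

variable {w : List Ordering} {i j : ℕ}

lemma forall_mem_gt_or_eq_iff (u : List Ordering) :
    (∀ a ∈ u, a = .gt ∨ a = .eq) ↔ .lt ∉ u := by
  constructor
  · intro h hlt
    simpa using h _ hlt
  · intro h a ha
    cases a <;> simp_all

lemma isOcc_decreasingSequenceLang_iff :
    IsOcc DecreasingSequenceLang w i j ↔ i ≤ j ∧ j < w.length ∧ w[i]? = some .gt ∧
      w[j]? = some .gt ∧ ∀ k, i ≤ k → k ≤ j → w[k]? ≠ some .lt := by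
  refine and_congr_right fun hij => and_congr_right fun hj => ?_
  have hlen := length_factor (i := i) hj
  have hne : factor w i j ≠ [] := by
    rw [← List.length_pos_iff, hlen]; omega
  rw [DecreasingSequenceLang, Set.mem_ofPred_eq, forall_mem_gt_or_eq_iff, mem_factor_iff hj,
    List.head?_eq_getElem?, List.getLast?_eq_getElem?, hlen,
    show 0 = i - i by omega, getElem?_factor_sub le_rfl hij,
    show j + 1 - i - 1 = j - i by omega, getElem?_factor_sub hij le_rfl]
  simp only [hne, ne_eq, not_false_eq_true, true_and, not_exists, not_and]
  tauto

def AlternatesAt (w : List Ordering) (k : ℕ) : Prop :=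
  (w[k]? = some .lt ∧ w[k + 1]? = some .gt) ∨ (w[k]? = some .gt ∧ w[k + 1]? = some .lt)

lemma isOcc_zigzagLang_iff :
    IsOcc ZigzagLang w i j ↔ i + 2 ≤ j ∧ j < w.length ∧ ∀ k, i ≤ k → k < j → AlternatesAt w k := by
  constructor
  · rintro ⟨hij, hj, hlen3, halt⟩
    rw [length_factor hj] at hlen3 halt
    refine ⟨by omega, hj, fun k hik hkj => ?_⟩
    have := halt (k - i) (by omega)
    rwa [getElem?_factor (by omega), getElem?_factor (by omega),
      show i + (k - i) = k by omega, show i + (k - i + 1) = k + 1 by omega] at this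
  · rintro ⟨hij, hj, halt⟩
    refine ⟨by omega, hj, by rw [length_factor hj]; omega, fun k hk => ?_⟩
    rw [length_factor hj] at hk
    rw [getElem?_factor (by omega), getElem?_factor (by omega), ← add_assoc]
    exact halt (i + k) (by omega) (by omega)

end Languages

section Covers

variable {w : List Ordering}

lemma isOcc_decreasingSequenceLang_glue {i₁ j₁ i₂ j₂ : ℕ}
    (h₁ : IsOcc DecreasingSequenceLang w i₁ j₁) (h₂ : IsOcc DecreasingSequenceLang w i₂ j₂)
    (hadj : i₂ ≤ j₁ + 1) : IsOcc DecreasingSequenceLang w i₁ (max j₁ j₂) := by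
  rw [isOcc_decreasingSequenceLang_iff] at h₁ h₂ ⊢
  obtain ⟨hij₁, hj₁, hi₁, hj₁gt, hmid₁⟩ := h₁
  obtain ⟨hij₂, hj₂, hi₂, hj₂gt, hmid₂⟩ := h₂
  refine ⟨by omega, max_lt hj₁ hj₂, hi₁, ?_, fun k hik hkj => ?_⟩
  · rcases max_choice j₁ j₂ with h | h <;> rw [h] <;> assumption
  · by_cases hk : k ≤ j₁
    · exact hmid₁ k hik hk
    · exact hmid₂ k (by omega) (by omega)

lemma isOcc_zigzagLang_glue {i₁ j₁ i₂ j₂ : ℕ}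
    (h₁ : IsOcc ZigzagLang w i₁ j₁) (h₂ : IsOcc ZigzagLang w i₂ j₂)
    (hadj : i₂ ≤ j₁) : IsOcc ZigzagLang w i₁ (max j₁ j₂) := by
  rw [isOcc_zigzagLang_iff] at h₁ h₂ ⊢
  obtain ⟨hij₁, hj₁, halt₁⟩ := h₁
  obtain ⟨hij₂, hj₂, halt₂⟩ := h₂
  refine ⟨by omega, max_lt hj₁ hj₂, fun k hik hkj => ?_⟩
  by_cases hk : k < j₁
  · exact halt₁ k hik hk
  · exact halt₂ k (by omega) (by omega)

lemma sumWidth_decreasingSequenceLang_eq_card :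
    sumWidth DecreasingSequenceLang (fun i j => j - i + 2) w =
      (coveredPositions DecreasingSequenceLang 0 1 w).card := by
  rw [card_coveredPositions fun h₁ h₂ _ hadj => isOcc_decreasingSequenceLang_glue h₁ h₂ hadj,
    sumWidth_eq_sum_maxOccs]
  refine sum_congr rfl fun p hp => ?_
  have := (mem_maxOccs.mp hp).1.1
  omega

lemma sumWidth_zigzagLang_eq_card :
    sumWidth ZigzagLang (fun i j => j - i) w = (coveredPositions ZigzagLang 1 0 w).card := by
  rw [card_coveredPositions fun h₁ h₂ _ hadj => isOcc_zigzagLang_glue h₁ h₂ (by omega),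
    sumWidth_eq_sum_maxOccs]
  refine sum_congr rfl fun p _ => ?_
  omega

lemma mem_coveredPositions_decreasingSequenceLang_of_gt {p : ℕ} (hp : w[p]? = some .gt) :
    p ∈ coveredPositions DecreasingSequenceLang 0 1 w ∧
      p + 1 ∈ coveredPositions DecreasingSequenceLang 0 1 w := by
  have hocc : IsOcc DecreasingSequenceLang w p p :=
    isOcc_decreasingSequenceLang_iff.mpr ⟨le_rfl, (List.getElem?_eq_some_iff.mp hp).1, hp, hp,
      fun k hpk hkp => by simp [show k = p by omega, hp]⟩
  obtain ⟨i, j, hmax, hi, hj⟩ := hocc.exists_isMaxOcc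
  exact ⟨mem_coveredPositions.mpr ⟨i, j, hmax, by omega, by omega⟩,
    mem_coveredPositions.mpr ⟨i, j, hmax, by omega, by omega⟩⟩

lemma alternatesAt_of_mem_coveredPositions_zigzagLang {k : ℕ}
    (hk : k ∈ coveredPositions ZigzagLang 1 0 w) : 1 ≤ k ∧ AlternatesAt w (k - 1) := by
  obtain ⟨i, j, hmax, hik, hkj⟩ := mem_coveredPositions.mp hk
  obtain ⟨-, -, halt⟩ := isOcc_zigzagLang_iff.mp hmax.1
  exact ⟨by omega, halt (k - 1) (by omega) (by omega)⟩

lemma coveredPositions_zigzagLang_subset :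
    coveredPositions ZigzagLang 1 0 w ⊆ coveredPositions DecreasingSequenceLang 0 1 w := by
  intro k hk
  obtain ⟨hk1, halt⟩ := alternatesAt_of_mem_coveredPositions_zigzagLang hk
  rcases halt with ⟨-, hgt⟩ | ⟨hgt, -⟩
  · exact (mem_coveredPositions_decreasingSequenceLang_of_gt (Nat.sub_add_cancel hk1 ▸ hgt)).1
  · exact Nat.sub_add_cancel hk1 ▸ (mem_coveredPositions_decreasingSequenceLang_of_gt hgt).2

lemma IsMaxOcc.eq_of_coveredPositions_subset {i j : ℕ}
    (hmax : IsMaxOcc DecreasingSequenceLang w i j)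
    (hcover : coveredPositions DecreasingSequenceLang 0 1 w ⊆ coveredPositions ZigzagLang 1 0 w) :
    i = j := by
  obtain ⟨hij, -, hgt, -, hmid⟩ := isOcc_decreasingSequenceLang_iff.mp hmax.1
  have hnext : i + 1 ∈ coveredPositions ZigzagLang 1 0 w :=
    hcover (mem_coveredPositions_decreasingSequenceLang_of_gt hgt).2
  obtain ⟨-, halt⟩ := alternatesAt_of_mem_coveredPositions_zigzagLang hnext
  have hlt : w[i + 1]? = some .lt := by
    rcases halt with ⟨h, -⟩ | ⟨-, h⟩
    · simp [hgt] at h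
    · exact h
  by_contra hne
  exact hmid (i + 1) (by omega) (by omega) hlt

end Covers

theorem even_sumWidth_decreasingSequenceLang_of_eq (w : List Ordering)
    (h : sumWidth DecreasingSequenceLang (fun i j => j - i + 2) w =
      sumWidth ZigzagLang (fun i j => j - i) w) :
    Even (sumWidth DecreasingSequenceLang (fun i j => j - i + 2) w) := by
  rw [sumWidth_decreasingSequenceLang_eq_card, sumWidth_zigzagLang_eq_card] at h
  have hcover := (eq_of_subset_of_card_le coveredPositions_zigzagLang_subset h.le).ge
  rw [sumWidth_eq_sum_maxOccs]
  refine even_sum _ fun p hp => ?_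
  rw [(mem_maxOccs.mp hp).eq_of_coveredPositions_subset hcover, Nat.sub_self]
  exact even_two

theorem even_of_sumWidth_eq_general (X : List ℤ)
    (h : sumWidthDecreasingSequence X = sumWidthZigzag X) :
    Even (sumWidthDecreasingSequence X) :=
  even_sumWidth_decreasingSequenceLang_of_eq (signature X) h

/-- For every integer sequence `X`, if
`sum_width_decreasing_sequence(X) = sum_width_zigzag(X)` then this common
value is even; equivalently, there is no integer sequence `X` with
`sum_width_decreasing_sequence(X)` odd and equal to `sum_width_zigzag(X)`. -/
theorem even_of_sumWidth_eq (X : List ℤ) (hX : X ≠ [])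
    (h : sumWidthDecreasingSequence X = sumWidthZigzag X) :
    Even (sumWidthDecreasingSequence X) :=
  even_of_sumWidth_eq_general X h
end
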